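/- arXiv:2308.11067 — 6 statements merged into one kernel-verified Lean document; each statement's English description precedes it below -/
import Mathlib

section
/- Let G be a group and a, b ∈ G satisfy ab² = b³a² and ba² = a³b². Then ba = 1 (equivalently, a = b⁻¹). -/
theorem stmt_0 {G : Type*} [Group G] (a b : G)
    (h1 : a * b ^ 2 = b ^ 3 * a ^ 2) (h2 : b * a ^ 2 = a ^ 3 * b ^ 2) :
    b * a = 1 := by
  have hb : b = a ^ 2 * b ^ 2 * b := by
    refine mul_right_cancel (b := a ^ 2) ?_
    calc b * a ^ 2 = a ^ 2 * (a * b ^ 2) := by rw [h2]; group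
      _ = a ^ 2 * b ^ 2 * b * a ^ 2 := by rw [h1]; group
  have hsq : b ^ 2 * a ^ 2 = 1 := mul_eq_one_comm.mp (right_eq_mul.mp hb)
  have hab : a * b * b = b := by
    calc a * b * b = b ^ 3 * a ^ 2 := by rw [mul_assoc, ← sq, h1]
      _ = b := by rw [pow_succ', mul_assoc, hsq, mul_one]
  exact mul_eq_one_comm.mp (mul_eq_right.mp hab)
end

section
/- The element y⁻¹xyx of the free group on x, y lies in the normal closure of the set {y⁻²xy²x⁻¹, x⁻³(y⁻¹xy)x²(y⁻¹x⁻²y)}. -/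
/-!
It suffices to show `y⁻¹ x y x = 1` in every group in which both relators are trivial.
Write `a = y⁻¹ x y`. The first relator says that `y²` commutes with `x`, so conjugation by `y`
swaps `x` and `a`. The second relator reads `a x² = x³ a²`; conjugating it by `y` gives
`x a² = a³ x²`. Substituting `a² = x⁻³ a x²` from the first into the second yields `a² = x⁻²`,
and then `a x² = x³ a² = x`, that is `a x = 1`.
-/

section

variable {G : Type*} [Group G]

theorem mul_eq_one_of_mul_sq_eq_pow_three_mul_sq {x a : G} (hxa : a * x ^ 2 = x ^ 3 * a ^ 2)
    (hax : x * a ^ 2 = a ^ 3 * x ^ 2) : a * x = 1 := by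
  have ha_sq : a ^ 2 = x⁻¹ ^ 3 * (a * x ^ 2) := by
    rw [hxa]; group
  have ha_cube : a ^ 3 = x * a ^ 2 * x⁻¹ ^ 2 := by
    rw [hax]; group
  have ha_sq_eq : a ^ 2 = x⁻¹ ^ 2 :=
    calc a ^ 2 = a ^ 3 * a⁻¹ := by group
      _ = x * (x⁻¹ ^ 3 * (a * x ^ 2)) * x⁻¹ ^ 2 * a⁻¹ := by rw [ha_cube, ← ha_sq]
      _ = x⁻¹ ^ 2 := by group
  calc a * x = a * x ^ 2 * x⁻¹ := by group
    _ = x ^ 3 * x⁻¹ ^ 2 * x⁻¹ := by rw [hxa, ha_sq_eq]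
    _ = 1 := by group

theorem conj_mul_eq_one_of_relators {x y : G} (h₁ : y⁻¹ ^ 2 * x * y ^ 2 * x⁻¹ = 1)
    (h₂ : x⁻¹ ^ 3 * (y⁻¹ * x * y) * x ^ 2 * (y⁻¹ * x⁻¹ ^ 2 * y) = 1) :
    y⁻¹ * x * y * x = 1 := by
  let c : G ≃* G := MulAut.conj y⁻¹
  have hc (g : G) : c g = y⁻¹ * g * y := by rw [MulAut.conj_apply, inv_inv]
  have hcc : c (c x) = x :=
    calc c (c x) = y⁻¹ ^ 2 * x * y ^ 2 := by rw [hc, hc]; simp only [sq, mul_assoc]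
      _ = x := mul_inv_eq_one.mp h₁
  simp only [← hc, map_pow, map_inv] at h₂ ⊢
  have hxa : c x * x ^ 2 = x ^ 3 * c x ^ 2 :=
    calc c x * x ^ 2 = x ^ 3 * (x⁻¹ ^ 3 * c x * x ^ 2 * (c x)⁻¹ ^ 2) * c x ^ 2 := by group
      _ = x ^ 3 * c x ^ 2 := by rw [h₂, mul_one]
  have hax := congrArg c hxa
  simp only [map_mul, map_pow, hcc] at hax
  exact mul_eq_one_of_mul_sq_eq_pow_three_mul_sq hxa hax

end

theorem stmt_6 :
    let x : FreeGroup (Fin 2) := FreeGroup.of 0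
    let y : FreeGroup (Fin 2) := FreeGroup.of 1
    y⁻¹ * x * y * x ∈ Subgroup.normalClosure
      ({y⁻¹ ^ 2 * x * y ^ 2 * x⁻¹, x⁻¹ ^ 3 * (y⁻¹ * x * y) * x ^ 2 * (y⁻¹ * x⁻¹ ^ 2 * y)} :
        Set (FreeGroup (Fin 2))) := by
  intro x y
  rw [← PresentedGroup.mk_eq_one_iff]
  have h₁ := PresentedGroup.one_of_mem (Set.mem_insert (y⁻¹ ^ 2 * x * y ^ 2 * x⁻¹)
    {x⁻¹ ^ 3 * (y⁻¹ * x * y) * x ^ 2 * (y⁻¹ * x⁻¹ ^ 2 * y)})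
  have h₂ := PresentedGroup.one_of_mem (Set.mem_insert_of_mem (y⁻¹ ^ 2 * x * y ^ 2 * x⁻¹)
    (Set.mem_singleton (x⁻¹ ^ 3 * (y⁻¹ * x * y) * x ^ 2 * (y⁻¹ * x⁻¹ ^ 2 * y))))
  simp only [map_mul, map_inv, map_pow] at h₁ h₂ ⊢
  exact conj_mul_eq_one_of_relators h₁ h₂
end

section
/- The presentations ⟨x, y | y⁻¹xyx⟩ and ⟨x, y | y⁻²xy²x⁻¹, x⁻³(y⁻¹xy)x²(y⁻¹x⁻²y)⟩ define isomorphic groups (both presenting the Klein bottle group), via the identity map on generators. -/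
/-!
Put `a = y⁻¹xy`. The first relator of the second presentation says that conjugation by `y`
swaps `x` and `a`; the second says `a x² = x³ a²`, and conjugating it by `y` gives
`x a² = a³ x²`. These two identities force `a = x⁻¹`, which is the Klein bottle relation.
Conversely, if conjugation by `y` inverts `x`, both relators of the second presentation
collapse to `1`.
-/

/-- The single Klein bottle relator `y⁻¹xyx`. -/
def kleinRels : Set (FreeGroup (Fin 2)) :=
  {(FreeGroup.of 1)⁻¹ * FreeGroup.of 0 * FreeGroup.of 1 * FreeGroup.of 0}

/-- The relators `y⁻²xy²x⁻¹` and `x⁻³(y⁻¹xy)x²(y⁻¹x⁻²y)`. -/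
def qRels : Set (FreeGroup (Fin 2)) :=
  { (FreeGroup.of 1)⁻¹ ^ 2 * FreeGroup.of 0 * FreeGroup.of 1 ^ 2 * (FreeGroup.of 0)⁻¹,
    (FreeGroup.of 0)⁻¹ ^ 3 * ((FreeGroup.of 1)⁻¹ * FreeGroup.of 0 * FreeGroup.of 1) *
      FreeGroup.of 0 ^ 2 * ((FreeGroup.of 1)⁻¹ * (FreeGroup.of 0)⁻¹ ^ 2 * FreeGroup.of 1) }

section Relations

variable {G : Type*} [Group G] {x y : G}

theorem eq_inv_of_mul_sq_eq_of_mul_sq_eq {a : G} (h₁ : a * x ^ 2 = x ^ 3 * a ^ 2)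
    (h₂ : x * a ^ 2 = a ^ 3 * x ^ 2) : a = x⁻¹ := by
  have ha : a = x ^ 2 * a ^ 3 :=
    calc a = a * x ^ 2 * x⁻¹ ^ 2 := by group
      _ = x ^ 2 * (x * a ^ 2) * x⁻¹ ^ 2 := by rw [h₁]; group
      _ = x ^ 2 * a ^ 3 := by rw [h₂]; group
  have hx : x ^ 2 = a⁻¹ ^ 2 :=
    calc x ^ 2 = x ^ 2 * a ^ 3 * a⁻¹ ^ 3 := by group
      _ = a⁻¹ ^ 2 := by rw [← ha]; group
  have ha2 : a ^ 2 = x⁻¹ ^ 2 := by rw [inv_pow, hx, inv_pow, inv_inv]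
  calc a = a * x ^ 2 * x⁻¹ ^ 2 := by group
    _ = x ^ 3 * x⁻¹ ^ 2 * x⁻¹ ^ 2 := by rw [h₁, ha2]
    _ = x⁻¹ := by group

theorem klein_rel_of_q_rels (h₁ : y⁻¹ ^ 2 * x * y ^ 2 * x⁻¹ = 1)
    (h₂ : x⁻¹ ^ 3 * (y⁻¹ * x * y) * x ^ 2 * (y⁻¹ * x⁻¹ ^ 2 * y) = 1) :
    y⁻¹ * x * y * x = 1 := by
  obtain ⟨a, ha⟩ : ∃ a, y⁻¹ * x * y = a := ⟨_, rfl⟩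
  have hconj (g : G) : MulAut.conj y⁻¹ g = y⁻¹ * g * y := by simp
  have hconj_x : MulAut.conj y⁻¹ x = a := by rw [hconj, ha]
  -- `group` does not identify `y * y` with `y ^ 2`, so powers are expanded before calling it.
  have hconj_a : MulAut.conj y⁻¹ a = x :=
    calc MulAut.conj y⁻¹ a = y⁻¹ ^ 2 * x * y ^ 2 * x⁻¹ * x := by
          rw [hconj, ← ha]; simp only [pow_succ, pow_zero, one_mul]; group
      _ = x := by rw [h₁, one_mul]
  have hxa : a * x ^ 2 = x ^ 3 * a ^ 2 :=
    calc a * x ^ 2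
        = x ^ 3 * (x⁻¹ ^ 3 * (y⁻¹ * x * y) * x ^ 2 * (y⁻¹ * x⁻¹ ^ 2 * y)) * a ^ 2 := by
          rw [← ha]; simp only [pow_succ, pow_zero, one_mul]; group
      _ = x ^ 3 * a ^ 2 := by rw [h₂, mul_one]
  have hax : x * a ^ 2 = a ^ 3 * x ^ 2 := by
    simpa only [map_mul, map_pow, hconj_x, hconj_a] using congrArg (MulAut.conj y⁻¹) hxa
  rw [ha, eq_inv_of_mul_sq_eq_of_mul_sq_eq hxa hax, inv_mul_cancel]

theorem q_rels_of_klein_rel (h : y⁻¹ * x * y * x = 1) :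
    y⁻¹ ^ 2 * x * y ^ 2 * x⁻¹ = 1 ∧
      x⁻¹ ^ 3 * (y⁻¹ * x * y) * x ^ 2 * (y⁻¹ * x⁻¹ ^ 2 * y) = 1 := by
  have hx : y⁻¹ * x * y = x⁻¹ := eq_inv_of_mul_eq_one_left h
  have hx_inv : y⁻¹ * x⁻¹ * y = x :=
    calc y⁻¹ * x⁻¹ * y = (y⁻¹ * x * y)⁻¹ := by group
      _ = x := by rw [hx, inv_inv]
  constructor
  · calc y⁻¹ ^ 2 * x * y ^ 2 * x⁻¹ = y⁻¹ * (y⁻¹ * x * y) * y * x⁻¹ := by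
          simp only [pow_succ, pow_zero, one_mul]; group
      _ = 1 := by rw [hx, hx_inv, mul_inv_cancel]
  · calc x⁻¹ ^ 3 * (y⁻¹ * x * y) * x ^ 2 * (y⁻¹ * x⁻¹ ^ 2 * y)
        = x⁻¹ ^ 3 * (y⁻¹ * x * y) * x ^ 2 * (y⁻¹ * x⁻¹ * y) ^ 2 := by
          simp only [pow_succ, pow_zero, one_mul]; group
      _ = 1 := by rw [hx, hx_inv]; group

end Relations

theorem normalClosure_le_of_mk_eq_one {α : Type*} {R S : Set (FreeGroup α)}
    (h : ∀ r ∈ R, PresentedGroup.mk S r = 1) :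
    Subgroup.normalClosure R ≤ Subgroup.normalClosure S :=
  Subgroup.normalClosure_le_normal fun r hr => PresentedGroup.mk_eq_one_iff.mp (h r hr)

theorem normalClosure_kleinRels_eq_qRels :
    Subgroup.normalClosure kleinRels = Subgroup.normalClosure qRels := by
  apply le_antisymm <;> apply normalClosure_le_of_mk_eq_one
  · have h₁ := PresentedGroup.one_of_mem (rels := qRels) (Set.mem_insert _ _)
    have h₂ := PresentedGroup.one_of_mem (rels := qRels) (Set.mem_insert_of_mem _ rfl)
    simp only [map_mul, map_inv, map_pow] at h₁ h₂
    rintro r rfl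
    simpa only [map_mul, map_inv] using klein_rel_of_q_rels h₁ h₂
  · have h := PresentedGroup.one_of_mem (rels := kleinRels) rfl
    simp only [map_mul, map_inv] at h
    obtain ⟨h₁, h₂⟩ := q_rels_of_klein_rel h
    rintro r (rfl | rfl)
    · simpa only [map_mul, map_inv, map_pow] using h₁
    · simpa only [map_mul, map_inv, map_pow] using h₂

theorem stmt_7 :
    ∃ e : PresentedGroup kleinRels ≃* PresentedGroup qRels,
      e (PresentedGroup.of 0) = PresentedGroup.of 0 ∧
      e (PresentedGroup.of 1) = PresentedGroup.of 1 :=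
  ⟨QuotientGroup.quotientMulEquivOfEq normalClosure_kleinRels_eq_qRels,
    QuotientGroup.quotientMulEquivOfEq_mk _ _, QuotientGroup.quotientMulEquivOfEq_mk _ _⟩
end

section
/- In the group ring S = ℤ[K] of the Klein bottle group K = ⟨x, y | y⁻¹xyx⟩, the identity (x³ − x − 1)(x⁻³ − x⁻⁴ − y⁻¹) − (y − x⁻¹)(x⁴ − x² − x)y⁻¹ = 1 holds. -/
/-- The Klein bottle group `⟨x, y | y⁻¹xyx⟩`. -/
abbrev KleinGroup := PresentedGroup kleinRels

/-- The integral group ring `ℤ[K]` of the Klein bottle group. -/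
abbrev S := MonoidAlgebra ℤ KleinGroup

/-- The generators `x`, `y` and their inverses, viewed in the group ring. -/
noncomputable def X : S := MonoidAlgebra.of ℤ KleinGroup (PresentedGroup.of 0)
noncomputable def Y : S := MonoidAlgebra.of ℤ KleinGroup (PresentedGroup.of 1)
noncomputable def Xi : S := MonoidAlgebra.of ℤ KleinGroup (PresentedGroup.of 0)⁻¹
noncomputable def Yi : S := MonoidAlgebra.of ℤ KleinGroup (PresentedGroup.of 1)⁻¹

/-! Both products expand to `1 + P` and `P` respectively, where
`P = x⁻⁴ - x⁻² - x⁻¹ - x³y⁻¹ + xy⁻¹ + y⁻¹`; for the second one this uses `y xⁿ y⁻¹ = x⁻ⁿ`. -/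

theorem MonoidHom.klein_identity_of_conj_eq_inv {R G : Type*} [Ring R] [Group G] (f : G →* R)
    {x y : G} (hxy : y * x * y⁻¹ = x⁻¹) :
    (f x ^ 3 - f x - 1) * (f x⁻¹ ^ 3 - f x⁻¹ ^ 4 - f y⁻¹) -
      (f y - f x⁻¹) * (f x ^ 4 - f x ^ 2 - f x) * f y⁻¹ = 1 := by
  have hconj (n : ℕ) : y * x ^ n * y⁻¹ = x⁻¹ ^ n := by rw [← conj_pow, hxy]
  simp only [← map_pow, sub_mul, mul_sub, one_mul, ← map_mul, hconj, hxy]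
  group
  rw [map_one]
  abel

lemma kleinGroup_conj_x_eq_inv :
    (PresentedGroup.of 1 : KleinGroup) * PresentedGroup.of 0 * (PresentedGroup.of 1)⁻¹ =
      (PresentedGroup.of 0)⁻¹ := by
  set x : KleinGroup := PresentedGroup.of 0
  set y : KleinGroup := PresentedGroup.of 1
  have hrel : y⁻¹ * x * y * x = 1 := PresentedGroup.one_of_mem (Set.mem_singleton _)
  rw [← mul_eq_one_iff_eq_inv]
  calc y * x * y⁻¹ * x = (y * x) * (y⁻¹ * x * y * x) * (y * x)⁻¹ := by group
    _ = 1 := by rw [hrel, mul_one, mul_inv_cancel]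

theorem stmt_14 :
    (X ^ 3 - X - 1) * (Xi ^ 3 - Xi ^ 4 - Yi) - (Y - Xi) * (X ^ 4 - X ^ 2 - X) * Yi = 1 :=
  (MonoidAlgebra.of ℤ KleinGroup).klein_identity_of_conj_eq_inv kleinGroup_conj_x_eq_inv
end

section
/- In the group ring S = ℤ[K] of the Klein bottle group, the right-module map ψ : S² → S given by ψ(u, v) = (y − x⁻¹)u + (x³ − x − 1)v is surjective. -/
theorem exists_mul_add_mul_eq_of_mul_add_mul_eq_one {R : Type*} [Semiring R] {a b u v : R}
    (h : a * u + b * v = 1) (s : R) : ∃ u' v', a * u' + b * v' = s :=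
  ⟨u * s, v * s, by rw [← mul_assoc, ← mul_assoc, ← add_mul, h, one_mul]⟩

namespace KleinGroup

theorem of_one_mul_of_zero :
    (PresentedGroup.of 1 : KleinGroup) * PresentedGroup.of 0 =
      (PresentedGroup.of 0)⁻¹ * PresentedGroup.of 1 := by
  have hrel : (PresentedGroup.of 1 : KleinGroup)⁻¹ * PresentedGroup.of 0 *
      PresentedGroup.of 1 * PresentedGroup.of 0 = 1 :=
    PresentedGroup.one_of_mem rfl
  have h := congrArg (fun g => (PresentedGroup.of 0 : KleinGroup)⁻¹ * (PresentedGroup.of 1 * g))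
    hrel
  group at h ⊢
  exact h

end KleinGroup

theorem Y_mul_X : Y * X = Xi * Y := by
  simp only [X, Y, Xi, ← map_mul, KleinGroup.of_one_mul_of_zero]

theorem X_mul_Xi : X * Xi = 1 := by
  simp only [X, Xi, ← map_mul, mul_inv_cancel, map_one]

theorem Xi_mul_X : Xi * X = 1 := by
  simp only [X, Xi, ← map_mul, inv_mul_cancel, map_one]

theorem Y_mul_X_mul (c : S) : Y * (X * c) = Xi * (Y * c) := by
  rw [← mul_assoc, Y_mul_X, mul_assoc]

theorem X_mul_Xi_mul (c : S) : X * (Xi * c) = c := by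
  rw [← mul_assoc, X_mul_Xi, one_mul]

theorem Xi_mul_X_mul (c : S) : Xi * (X * c) = c := by
  rw [← mul_assoc, Xi_mul_X, one_mul]

theorem Y_sub_Xi_mul_add_mul_eq_one :
    (Y - Xi) * (X ^ 2 + X ^ 3 - X - X ^ 5) + (X ^ 3 - X - 1) * (Xi ^ 4 * Y - Xi ^ 5 * Y - X) =
      1 := by
  noncomm_ring
  -- rewrite every word into the normal form `x^k y^ε` (with `k ∈ ℤ`), then collect terms
  simp only [Y_mul_X_mul, Y_mul_X, X_mul_Xi_mul, Xi_mul_X_mul, Xi_mul_X]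
  abel

/-- The right-module map `ψ(u, v) = (y - x⁻¹)u + (x³ - x - 1)v` is surjective. -/
theorem stmt_15 : ∀ s : S, ∃ u v : S, (Y - Xi) * u + (X ^ 3 - X - 1) * v = s :=
  exists_mul_add_mul_eq_of_mul_add_mul_eq_one Y_sub_Xi_mul_add_mul_eq_one
end

section
/- The element y − x⁻¹ is not a zero divisor in the group ring ℤ[K] of the Klein bottle group K = ⟨x, y | y⁻¹xyx⟩. -/
/-!
Since `y - x⁻¹ = x⁻¹ (xy - 1) = (yx - 1) x⁻¹`, it suffices that `g - 1` is not a zero divisor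
for `g = xy` and `g = yx`. Both have infinite order, as the homomorphism `K → ℤ`,
`x ↦ 0`, `y ↦ 1`, sends them to `1`. If `g s = s` with `g` of infinite order, the coefficients
of `s` are constant along the infinite orbits of `a ↦ g⁻¹ a`, and a finitely supported function
constant on an infinite set vanishes there.
-/

theorem Function.eq_zero_of_comp_eq_of_hasFiniteSupport {α M : Type*} [Zero M] {f : α → M}
    (hf : f.HasFiniteSupport) {σ : α → α} (hσ : ∀ a, Function.Injective fun n => σ^[n] a)
    (h : ∀ a, f (σ a) = f a) : f = 0 := by
  funext a
  by_contra ha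
  have horbit : ∀ n, f (σ^[n] a) = f a := fun n => by
    induction n with
    | zero => rfl
    | succ n ih => rw [Function.iterate_succ_apply', h, ih]
  refine Set.infinite_range_of_injective (hσ a) (hf.subset ?_)
  rintro _ ⟨n, rfl⟩
  exact (horbit n).trans_ne ha

namespace MonoidAlgebra

variable {k G : Type*} [Semiring k] [Group G] {g : G}

theorem eq_zero_of_of_mul_eq_self (hg : ¬IsOfFinOrder g) {s : MonoidAlgebra k G}
    (h : of k G g * s = s) : s = 0 := by
  refine coeff_eq_zero.1 <| Finsupp.coe_eq_zero.1 <|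
    Function.eq_zero_of_comp_eq_of_hasFiniteSupport (σ := (g⁻¹ * ·)) s.coeff.hasFiniteSupport
      (fun a => ?_) (fun a => ?_)
  · simp only [mul_left_iterate_apply]
    exact (mul_left_injective a).comp (injective_pow_iff_not_isOfFinOrder.2 (by simpa using hg))
  · conv_rhs => rw [← h]
    simp

theorem eq_zero_of_mul_of_eq_self (hg : ¬IsOfFinOrder g) {s : MonoidAlgebra k G}
    (h : s * of k G g = s) : s = 0 := by
  refine coeff_eq_zero.1 <| Finsupp.coe_eq_zero.1 <|
    Function.eq_zero_of_comp_eq_of_hasFiniteSupport (σ := (· * g⁻¹)) s.coeff.hasFiniteSupport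
      (fun a => ?_) (fun a => ?_)
  · simp only [mul_right_iterate_apply]
    exact (mul_right_injective a).comp (injective_pow_iff_not_isOfFinOrder.2 (by simpa using hg))
  · conv_rhs => rw [← h]
    simp

end MonoidAlgebra

noncomputable def kleinToInt : KleinGroup →* Multiplicative ℤ :=
  PresentedGroup.toGroup (f := ![1, Multiplicative.ofAdd 1]) (by rintro _ rfl; simp)

theorem not_isOfFinOrder_of_kleinToInt_ne_one {g : KleinGroup} (hg : kleinToInt g ≠ 1) :
    ¬IsOfFinOrder g :=
  fun h => hg (kleinToInt.isOfFinOrder h).eq_one'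

theorem isUnit_Xi : IsUnit Xi := (Group.isUnit _).map _

theorem Y_sub_Xi_eq_Xi_mul :
    Y - Xi =
      Xi * (MonoidAlgebra.of ℤ KleinGroup (PresentedGroup.of 0 * PresentedGroup.of 1) - 1) := by
  rw [Y, Xi, mul_sub, map_mul, ← mul_assoc, ← map_mul, inv_mul_cancel, map_one, one_mul, mul_one]

theorem Y_sub_Xi_eq_mul_Xi :
    Y - Xi =
      (MonoidAlgebra.of ℤ KleinGroup (PresentedGroup.of 1 * PresentedGroup.of 0) - 1) * Xi := by
  rw [Y, Xi, sub_mul, map_mul, mul_assoc, ← map_mul, mul_inv_cancel, map_one, one_mul, mul_one]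

/-- `y - x⁻¹` is not a zero divisor in `ℤ[K]`, on either side. -/
theorem stmt_17 :
    (∀ s : S, (Y - Xi) * s = 0 → s = 0) ∧ (∀ s : S, s * (Y - Xi) = 0 → s = 0) := by
  have hxy : ¬IsOfFinOrder (PresentedGroup.of 0 * PresentedGroup.of 1 : KleinGroup) :=
    not_isOfFinOrder_of_kleinToInt_ne_one (by simp [kleinToInt])
  have hyx : ¬IsOfFinOrder (PresentedGroup.of 1 * PresentedGroup.of 0 : KleinGroup) :=
    not_isOfFinOrder_of_kleinToInt_ne_one (by simp [kleinToInt])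
  constructor
  · intro s h
    rw [Y_sub_Xi_eq_Xi_mul, mul_assoc, isUnit_Xi.mul_right_eq_zero, sub_mul, one_mul,
      sub_eq_zero] at h
    exact MonoidAlgebra.eq_zero_of_of_mul_eq_self hxy h
  · intro s h
    rw [Y_sub_Xi_eq_mul_Xi, ← mul_assoc, isUnit_Xi.mul_left_eq_zero, mul_sub, mul_one,
      sub_eq_zero] at h
    exact MonoidAlgebra.eq_zero_of_mul_of_eq_self hyx h
end
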